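/- Consider the differential operator family T(α,β) = (ℏ∂)⁴ − 27q(ℏ∂)² − αℏq(ℏ∂) − βℏ²q over the ring generated by ℏ∂ with coefficients polynomial in q and ℏ, where ∂ = q d/dq. Let * be the formal adjoint involution determined by ∂* = −∂, ℏ* = −ℏ, q* = q (an anti-automorphism). Then T(α,β) is formally self-adjoint (T* = T) if and only if α = 27. -/
import Mathlib


open MvPolynomial

/-- `ℂ[q,ℏ]` with `q = X 0`, `ℏ = X 1`. -/
abbrev Sqh : Type := MvPolynomial (Fin 2) ℂ

/-- Multiplication by a polynomial, as an operator. -/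
noncomputable def Mop (s : Sqh) : Module.End ℂ Sqh := LinearMap.mulLeft ℂ s

/-- `∂ = q d/dq`. -/
noncomputable def delOp : Module.End ℂ Sqh :=
  Mop (X 0) * (pderiv (0 : Fin 2)).toLinearMap

/-- `ℏ∂`. -/
noncomputable def hdOp : Module.End ℂ Sqh := Mop (X 1) * delOp

/-- `T(α,β) = (ℏ∂)⁴ − 27q(ℏ∂)² − αℏq(ℏ∂) − βℏ²q`. -/
noncomputable def Tfam (α β : ℂ) : Module.End ℂ Sqh :=
  hdOp ^ 4 - (27 : ℂ) • (Mop (X 0) * hdOp ^ 2)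
    - α • (Mop (X 1 * X 0) * hdOp) - β • Mop (X 1 ^ 2 * X 0)

/-- The formal adjoint `T(α,β)*`: apply the anti-automorphism determined by `∂* = −∂`,
`ℏ* = −ℏ`, `q* = q` to each term of `T(α,β)` (reversing products), so that
`T* = (ℏ∂)⁴ − (ℏ∂)²·27q + αℏ(ℏ∂)q − βℏ²q`. -/
noncomputable def TfamAdj (α β : ℂ) : Module.End ℂ Sqh :=
  hdOp ^ 4 - (27 : ℂ) • (hdOp ^ 2 * Mop (X 0))
    + α • (Mop (X 1) * hdOp * Mop (X 0)) - β • (Mop (X 1 ^ 2) * Mop (X 0))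

lemma Mop_mul (s t : Sqh) : Mop (s * t) = Mop s * Mop t := by
  apply LinearMap.ext; intro p
  simp [Mop, Module.End.mul_apply, mul_assoc]

lemma L1 : hdOp * Mop (X 0) = Mop (X 0) * hdOp + Mop (X 1 * X 0) := by
  apply LinearMap.ext; intro p
  simp [hdOp, delOp, Mop, Module.End.mul_apply]
  ring

lemma Lh : hdOp * Mop (X 1) = Mop (X 1) * hdOp := by
  apply LinearMap.ext; intro p
  simp [hdOp, delOp, Mop, Module.End.mul_apply]
  ring

lemma L2 : hdOp * Mop (X 1 * X 0) = Mop (X 1 * X 0) * hdOp + Mop (X 1 ^ 2 * X 0) := by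
  have : (X 1 ^ 2 * X 0 : Sqh) = X 1 * (X 1 * X 0) := by ring
  rw [Mop_mul, ← mul_assoc, Lh, this, Mop_mul (X 1 : Sqh) (X 1 * X 0),
    Mop_mul (X 1 : Sqh) (X 0), mul_assoc, L1, mul_add, ← mul_assoc, ← Mop_mul]

lemma L3 : Mop (X 1) * hdOp * Mop (X 0)
    = Mop (X 1 * X 0) * hdOp + Mop (X 1 ^ 2 * X 0) := by
  have h2 : (X 1 ^ 2 * X 0 : Sqh) = X 1 * (X 1 * X 0) := by ring
  rw [mul_assoc, L1, mul_add, ← mul_assoc, ← Mop_mul, h2, Mop_mul (X 1 : Sqh) (X 1 * X 0)]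

lemma Lkey : hdOp ^ 2 * Mop (X 0)
    = Mop (X 0) * hdOp ^ 2 + (2 : ℂ) • (Mop (X 1 * X 0) * hdOp) + Mop (X 1 ^ 2 * X 0) := by
  rw [pow_two, mul_assoc, L1, mul_add, ← mul_assoc, L1, L2]
  rw [two_smul]
  noncomm_ring

/-- `T(α,β) = (ℏ∂)⁴ − 27q(ℏ∂)² − αℏq(ℏ∂) − βℏ²q` is formally self-adjoint
(`T* = T` for the involution with `∂* = −∂`, `ℏ* = −ℏ`) if and only if `α = 27`. -/
theorem stmt14 (α β : ℂ) : TfamAdj α β = Tfam α β ↔ α = 27 := by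
  constructor
  · intro h
    have h1 := LinearMap.congr_fun h 1
    simp [Tfam, TfamAdj, hdOp, delOp, Mop, pow_succ, Module.End.mul_apply,
      pderiv_X_self, pderiv_X, mul_comm, mul_assoc, mul_left_comm] at h1
    have hm : (X 0 * (X 1 * X 1) : Sqh) ≠ 0 :=
      mul_ne_zero (X_ne_zero _) (mul_ne_zero (X_ne_zero _) (X_ne_zero _))
    have h2 : (α - 27) • (X 0 * (X 1 * X 1) : Sqh) = 0 := by
      rw [sub_smul, ← h1]; abel
    rcases smul_eq_zero.mp h2 with h3 | h3
    · exact sub_eq_zero.mp h3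
    · exact absurd h3 hm
  · intro h
    subst h
    unfold TfamAdj Tfam
    rw [Lkey, L3, ← Mop_mul]
    module
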